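/- arXiv:1804.10452 — 3 statements merged into one kernel-verified Lean document; each statement's English description precedes it below -/
import Mathlib

section
/- For any x, y ∈ H, n < ω and α < Λ: x S_n^α y holds if and only if x R_n^α y holds, i.e., the transfinite iterates of the accessibility relation agree on H whether computed in the frame H or in the larger frame I. -/
open Ordinal

noncomputable def e1 (a : Ordinal) : Ordinal := omega0 ^ a - 1

noncomputable def eIter : ℕ → Ordinal → Ordinal
  | 0 => id
  | n + 1 => e1 ∘ eIter n

/-- Ordinal logarithm: exponent of the least term in the Cantor normal form. -/
noncomputable def ell (o : Ordinal) : Ordinal := (Ordinal.CNF omega0 o).getLast?.elim 0 Prod.fst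

/-- Ignatiev (ℓ-)sequences. -/
def IsIgnatiev (x : ℕ → Ordinal) : Prop := ∀ i, x (i + 1) ≤ ell (x i)

/-- The domain of Ignatiev's frame below Λ. -/
def Iset (Λ : Ordinal) : Set (ℕ → Ordinal) := {x | IsIgnatiev x ∧ ∀ i, x i < Λ}

/-- Finitely supported Ignatiev sequences below Λ. -/
def Hset (Λ : Ordinal) : Set (ℕ → Ordinal) := {x | x ∈ Iset Λ ∧ ∃ j, x j = 0}

/-- The accessibility relations. -/
def Rrel (n : ℕ) (x y : ℕ → Ordinal) : Prop :=
  (∀ m ≤ n, y m < x m) ∧ ∀ i, n < i → y i ≤ x i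

/-- Transfinite iterates of the accessibility relation, with witnesses in `D`. -/
noncomputable def Iter (D : Set (ℕ → Ordinal)) (n : ℕ) :
    Ordinal → (ℕ → Ordinal) → (ℕ → Ordinal) → Prop :=
  Ordinal.lt_wf.fix fun α rec x y =>
    if α = 0 then x = y
    else ∀ β, ∀ h : β < α, ∃ z ∈ D, Rrel n x z ∧ rec β h z y

inductive Formula : Type 1 where
  | top : Formula
  | and : Formula → Formula → Formula
  | dia : ℕ → Ordinal → Formula → Formula

def Formula.Bounded (Λ : Ordinal) : Formula → Prop
  | .top => True
  | .and φ ψ => φ.Bounded Λ ∧ ψ.Bounded Λ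
  | .dia _ a φ => a < Λ ∧ φ.Bounded Λ

/-- Forcing over the frame with domain `D`. -/
noncomputable def Forces (D : Set (ℕ → Ordinal)) : (ℕ → Ordinal) → Formula → Prop
  | _, .top => True
  | x, .and φ ψ => Forces D x φ ∧ Forces D x ψ
  | x, .dia n a φ => ∃ y ∈ D, Iter D n a x y ∧ Forces D y φ

/-- Monomial normal forms, coded as lists of (base, exponent) pairs. -/
def MNFc (Λ : Ordinal) (L : List (ℕ × Ordinal)) : Prop :=
  L.Chain' (fun p q => p.1 < q.1) ∧ (∀ p ∈ L, 0 < p.2 ∧ p.2 < Λ) ∧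
    L.Chain' (fun p q => ∃ δ < Λ, p.2 = eIter (q.1 - p.1) q.2 * (2 + δ))

/-- The formula coded by an MNF code. -/
def toFormula : List (ℕ × Ordinal) → Formula
  | [] => .top
  | p :: L => .and (.dia p.1 p.2 .top) (toFormula L)

/-- The projections π of an MNF, i.e. the translated Ignatiev sequence x_ψ. -/
noncomputable def proj : List (ℕ × Ordinal) → ℕ → Ordinal
  | [], _ => 0
  | (n, a) :: L, m => if m ≤ n then eIter (n - m) a else proj L m

/-!
An `R_n`-successor `z` of a sequence `x ∈ H` lies again in `H`: past `n` it is dominated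
entrywise by `x`, and `x` vanishes from some index on, because `ℓ(0) = 0` forces an Ignatiev
sequence to stay at `0` once it reaches `0`. Hence every witness chain for `R_n^α` in `I` that
starts in `H` stays in `H`, and the two iterates agree by induction on `α`.
-/

lemma iter_iff (D : Set (ℕ → Ordinal)) (n : ℕ) (α : Ordinal) (x y : ℕ → Ordinal) :
    Iter D n α x y ↔
      if α = 0 then x = y else ∀ β < α, ∃ z ∈ D, Rrel n x z ∧ Iter D n β z y := by
  unfold Iter
  rw [Ordinal.lt_wf.fix_eq]

theorem iter_iff_of_closed {D E : Set (ℕ → Ordinal)} {n : ℕ} (hDE : D ⊆ E)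
    (hclosed : ∀ x ∈ D, ∀ z ∈ E, Rrel n x z → z ∈ D) (α : Ordinal) {x : ℕ → Ordinal}
    (hx : x ∈ D) (y : ℕ → Ordinal) : Iter D n α x y ↔ Iter E n α x y := by
  induction α using WellFoundedLT.induction generalizing x with
  | _ α IH =>
    rw [iter_iff, iter_iff]
    split_ifs
    · rfl
    refine forall₂_congr fun β hβ => ⟨?_, ?_⟩
    · rintro ⟨z, hzD, hR, hzy⟩
      exact ⟨z, hDE hzD, hR, (IH β hβ hzD).mp hzy⟩
    · rintro ⟨z, hzE, hR, hzy⟩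
      have hzD := hclosed x hx z hzE hR
      exact ⟨z, hzD, hR, (IH β hβ hzD).mpr hzy⟩

@[simp]
lemma ell_zero : ell 0 = 0 := by
  simp [ell, Ordinal.CNF.zero_right]

lemma IsIgnatiev.eq_zero_of_le {x : ℕ → Ordinal} (hx : IsIgnatiev x) {j i : ℕ}
    (hj : x j = 0) (hji : j ≤ i) : x i = 0 := by
  induction i, hji using Nat.le_induction with
  | base => exact hj
  | succ i _ IH => simpa [IH] using hx i

lemma Rrel.mem_Hset {Λ : Ordinal} {n : ℕ} {x z : ℕ → Ordinal} (hR : Rrel n x z)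
    (hx : x ∈ Hset Λ) (hz : z ∈ Iset Λ) : z ∈ Hset Λ := by
  obtain ⟨⟨hxIg, -⟩, j, hj⟩ := hx
  refine ⟨hz, max j (n + 1), nonpos_iff_eq_zero.mp ?_⟩
  calc z (max j (n + 1)) ≤ x (max j (n + 1)) := hR.2 _ (by omega)
    _ = 0 := hxIg.eq_zero_of_le hj (le_max_left _ _)

theorem iter_S_iff_R_general (Λ : Ordinal)
    (n : ℕ) (α : Ordinal) (x y : ℕ → Ordinal)
    (hx : x ∈ Hset Λ) :
    Iter (Hset Λ) n α x y ↔ Iter (Iset Λ) n α x y :=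
  iter_iff_of_closed (fun _ hz => hz.1) (fun _ hx _ hz hR => hR.mem_Hset hx hz) α hx y

theorem iter_S_iff_R (Λ : Ordinal) (hpos : 0 < Λ) (heps : Ordinal.omega0 ^ Λ = Λ)
    (n : ℕ) (α : Ordinal) (hα : α < Λ) (x y : ℕ → Ordinal)
    (hx : x ∈ Hset Λ) (hy : y ∈ Hset Λ) :
    Iter (Hset Λ) n α x y ↔ Iter (Iset Λ) n α x y :=
  iter_S_iff_R_general Λ n α x y hx
end

section
/- For any x ∈ H and any formula φ of the TSC language, x forces φ in the model J (over I) if and only if x forces φ in the model H: J, x ⊩ φ ⟺ H, x ⊩ φ. -/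
/-!
An `R_n`-successor `z` of a point `x ∈ H` again lies in `H`: if `x j = 0`, then `j > n` (as
`z j < x j` for `j ≤ n`), so `z j ≤ x j = 0`. Thus `H` is a generated subframe of `I`, and the
iterated relations and the forcing relation of a generated subframe agree with those of the
ambient frame at its points.
-/

open Ordinal

def IsGeneratedSubframe (D E : Set (ℕ → Ordinal)) : Prop :=
  D ⊆ E ∧ ∀ n x z, x ∈ D → z ∈ E → Rrel n x z → z ∈ D

section Iter

variable (D : Set (ℕ → Ordinal)) (n : ℕ)

theorem iter_eq (α : Ordinal) (x y : ℕ → Ordinal) :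
    Iter D n α x y =
      if α = 0 then x = y else ∀ β < α, ∃ z ∈ D, Rrel n x z ∧ Iter D n β z y := by
  rw [Iter, WellFounded.fix_eq]

theorem iter_zero_iff (x y : ℕ → Ordinal) : Iter D n 0 x y ↔ x = y := by
  rw [iter_eq, if_pos rfl]

theorem iter_iff_of_ne_zero {α : Ordinal} (hα : α ≠ 0) (x y : ℕ → Ordinal) :
    Iter D n α x y ↔ ∀ β < α, ∃ z ∈ D, Rrel n x z ∧ Iter D n β z y := by
  rw [iter_eq, if_neg hα]

end Iter

namespace IsGeneratedSubframe

variable {D E : Set (ℕ → Ordinal)} (hDE : IsGeneratedSubframe D E)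
include hDE

theorem mem_of_iter {n : ℕ} {α : Ordinal} {x y : ℕ → Ordinal} (hx : x ∈ D)
    (h : Iter E n α x y) : y ∈ D := by
  rcases eq_or_ne α 0 with rfl | hα
  · exact (iter_zero_iff E n x y).mp h ▸ hx
  · -- the step below `β = 0` makes `y` itself an `Rrel n`-successor of `x`
    obtain ⟨z, hzE, hxz, hzy⟩ :=
      (iter_iff_of_ne_zero E n hα x y).mp h 0 (pos_iff_ne_zero.mpr hα)
    exact (iter_zero_iff E n z y).mp hzy ▸ hDE.2 n x z hx hzE hxz

theorem iter_iff (n : ℕ) (α : Ordinal) {x : ℕ → Ordinal} (hx : x ∈ D) (y : ℕ → Ordinal) :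
    Iter E n α x y ↔ Iter D n α x y := by
  induction α using WellFoundedLT.induction generalizing x with
  | _ α ih =>
    rcases eq_or_ne α 0 with rfl | hα
    · rw [iter_zero_iff, iter_zero_iff]
    rw [iter_iff_of_ne_zero E n hα, iter_iff_of_ne_zero D n hα]
    refine forall₂_congr fun β hβ => ⟨?_, ?_⟩
    · rintro ⟨z, hzE, hxz, hzy⟩
      have hzD := hDE.2 n x z hx hzE hxz
      exact ⟨z, hzD, hxz, (ih β hβ hzD).mp hzy⟩
    · rintro ⟨z, hzD, hxz, hzy⟩
      exact ⟨z, hDE.1 hzD, hxz, (ih β hβ hzD).mpr hzy⟩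

theorem forces_iff (φ : Formula) {x : ℕ → Ordinal} (hx : x ∈ D) :
    Forces E x φ ↔ Forces D x φ := by
  induction φ generalizing x with
  | top => exact Iff.rfl
  | and φ ψ ihφ ihψ => exact and_congr (ihφ hx) (ihψ hx)
  | dia n a φ ih =>
    constructor
    · rintro ⟨y, -, hxy, hy⟩
      have hyD := hDE.mem_of_iter hx hxy
      exact ⟨y, hyD, (hDE.iter_iff n a hx y).mp hxy, (ih hyD).mp hy⟩
    · rintro ⟨y, hyD, hxy, hy⟩
      exact ⟨y, hDE.1 hyD, (hDE.iter_iff n a hx y).mpr hxy, (ih hyD).mpr hy⟩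

end IsGeneratedSubframe

theorem isGeneratedSubframe_Hset_Iset (Λ : Ordinal) : IsGeneratedSubframe (Hset Λ) (Iset Λ) := by
  refine ⟨fun x hx => hx.1, fun n x z ⟨_, j, hxj⟩ hz hxz => ⟨hz, j, ?_⟩⟩
  rcases le_or_gt j n with hjn | hnj
  · exact absurd (hxz.1 j hjn) (hxj ▸ not_lt_zero)
  · exact nonpos_iff_eq_zero.mp (hxj ▸ hxz.2 j hnj)

theorem forcing_preserved_general (Λ : Ordinal)
    (x : ℕ → Ordinal) (hx : x ∈ Hset Λ) (φ : Formula) :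
    Forces (Iset Λ) x φ ↔ Forces (Hset Λ) x φ :=
  (isGeneratedSubframe_Hset_Iset Λ).forces_iff φ hx

theorem forcing_preserved (Λ : Ordinal) (hpos : 0 < Λ) (heps : Ordinal.omega0 ^ Λ = Λ)
    (x : ℕ → Ordinal) (hx : x ∈ Hset Λ) (φ : Formula) (hφ : φ.Bounded Λ) :
    Forces (Iset Λ) x φ ↔ Forces (Hset Λ) x φ :=
  forcing_preserved_general Λ x hx φ
end

section
/- For every ψ in monomial normal form, the translated sequence x_ψ = ⟨π_i(ψ)⟩_{i<ω} is a finitely supported Ignatiev sequence, i.e., x_ψ ∈ H: it satisfies π_{i+1}(ψ) ≤ ℓ(π_i(ψ)) for all i, all entries are < Λ, and some entry is 0. -/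
open Ordinal

/-!
For `a > 0` the map `e` is `a ↦ ω ^ a`, so below a base `nᵢ` each entry is `ω` raised to
the next one, and `ℓ (ω ^ β) ≥ β`. At a base the MNF condition writes `αᵢ` as
`ω ^ π_{nᵢ+1} * (2 + δᵢ)`, which again has `ℓ ≥ π_{nᵢ+1}`; past the last base the
sequence vanishes. Entries stay below `Λ` because `Λ = ω ^ Λ` is closed under `β ↦ ω ^ β`.
-/

theorem e1_eq_opow {a : Ordinal} (ha : 0 < a) : e1 a = ω ^ a := by
  rw [e1]
  nth_rw 1 [← Ordinal.one_add_of_omega0_le (left_le_opow ω ha)]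
  exact Ordinal.add_sub_cancel 1 _

theorem eIter_pos {a : Ordinal} (ha : 0 < a) : ∀ k, 0 < eIter k a
  | 0 => ha
  | k + 1 => by
    change 0 < e1 (eIter k a)
    rw [e1_eq_opow (eIter_pos ha k)]
    exact opow_pos _ omega0_pos

theorem eIter_succ_of_pos {a : Ordinal} (ha : 0 < a) (k : ℕ) :
    eIter (k + 1) a = ω ^ eIter k a :=
  e1_eq_opow (eIter_pos ha k)

theorem eIter_lt {Λ a : Ordinal} (hΛ : ω ^ Λ = Λ) (ha : a < Λ) : ∀ k, eIter k a < Λ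
  | 0 => ha
  | k + 1 => calc
      e1 (eIter k a) ≤ ω ^ eIter k a := Ordinal.sub_le_self _ _
      _ < ω ^ Λ := (opow_lt_opow_iff_right one_lt_omega0).2 (eIter_lt hΛ ha k)
      _ = Λ := hΛ

theorem le_ell_of_opow_dvd {b α : Ordinal} (hα : α ≠ 0) (hdvd : ω ^ b ∣ α) :
    b ≤ ell α := by
  induction α using WellFoundedLT.induction with
  | _ α ih =>
    have hb : b ≤ log ω α :=
      (opow_le_iff_le_log one_lt_omega0 hα).1 (Ordinal.le_of_dvd hα hdvd)
    rw [ell, CNF.ne_zero hα]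
    set r := α % ω ^ log ω α
    have hr : ω ^ b ∣ r := by
      rw [← div_add_mod α (ω ^ log ω α)] at hdvd
      exact (Ordinal.dvd_add_iff (dvd_mul_of_dvd_left (opow_dvd_opow _ hb) _)).1 hdvd
    rcases eq_or_ne r 0 with hr0 | hr0
    · simpa [hr0] using hb
    · have := ih r (mod_opow_log_lt_self ω hα) hr0 hr
      obtain ⟨x, l, hxl⟩ : ∃ x l, CNF ω r = x :: l := ⟨_, _, CNF.ne_zero hr0⟩
      rw [ell, hxl] at this
      rwa [hxl, List.getLast?_cons_cons]

theorem le_ell_opow_mul (b : Ordinal) {c : Ordinal} (hc : 0 < c) : b ≤ ell (ω ^ b * c) :=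
  le_ell_of_opow_dvd (mul_pos (opow_pos _ omega0_pos) hc).ne' (dvd_mul_right _ _)

theorem MNFc.tail {Λ : Ordinal} {p : ℕ × Ordinal} {L : List (ℕ × Ordinal)}
    (h : MNFc Λ (p :: L)) : MNFc Λ L :=
  ⟨h.1.tail, fun q hq => h.2.1 q (List.mem_cons_of_mem _ hq), h.2.2.tail⟩

section proj

variable {n m : ℕ} {a : Ordinal} {L : List (ℕ × Ordinal)}

theorem proj_cons_of_le (h : m ≤ n) : proj ((n, a) :: L) m = eIter (n - m) a := if_pos h

theorem proj_cons_of_lt (h : n < m) : proj ((n, a) :: L) m = proj L m := if_neg (not_le.2 h)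

theorem proj_eq_zero_of_forall_lt (h : ∀ p ∈ L, p.1 < m) : proj L m = 0 := by
  induction L with
  | nil => rfl
  | cons p L ih =>
    rw [proj_cons_of_lt (h p List.mem_cons_self)]
    exact ih fun q hq => h q (List.mem_cons_of_mem _ hq)

theorem exists_proj_eq_zero (L : List (ℕ × Ordinal)) : ∃ m, proj L m = 0 :=
  ⟨(L.map fun p => p.1 + 1).sum,
    proj_eq_zero_of_forall_lt fun _ hp =>
      List.le_sum_of_mem (List.mem_map_of_mem (f := fun p : ℕ × Ordinal => p.1 + 1) hp)⟩

theorem proj_lt {Λ : Ordinal} (hΛ : ω ^ Λ = Λ) (hL : ∀ p ∈ L, p.2 < Λ) (m : ℕ) :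
    proj L m < Λ := by
  induction L with
  | nil => exact hΛ ▸ opow_pos Λ omega0_pos
  | cons p L ih =>
    rcases le_or_gt m p.1 with hm | hm
    · rw [proj_cons_of_le hm]
      exact eIter_lt hΛ (hL p List.mem_cons_self) _
    · rw [proj_cons_of_lt hm]
      exact ih fun q hq => hL q (List.mem_cons_of_mem _ hq)

theorem proj_succ_le_ell_head {Λ : Ordinal} (hL : MNFc Λ ((n, a) :: L)) :
    proj L (n + 1) ≤ ell a := by
  match L, hL with
  | [], _ => exact zero_le
  | (n', a') :: L', hL =>
    obtain ⟨hnn', -⟩ := List.isChain_cons_cons.1 hL.1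
    obtain ⟨⟨δ, -, ha⟩, -⟩ := List.isChain_cons_cons.1 hL.2.2
    dsimp only at hnn' ha
    have ha' : 0 < a' := (hL.2.1 _ (List.mem_cons_of_mem _ List.mem_cons_self)).1
    rw [proj_cons_of_le hnn', ha, show n' - n = n' - (n + 1) + 1 by omega,
      eIter_succ_of_pos ha']
    exact le_ell_opow_mul _ (two_pos.trans_le le_self_add)

theorem isIgnatiev_proj {Λ : Ordinal} (hL : MNFc Λ L) : IsIgnatiev (proj L) := by
  induction L with
  | nil => exact fun _ => zero_le
  | cons p L ih =>
    obtain ⟨n, a⟩ := p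
    have ha : 0 < a := (hL.2.1 _ List.mem_cons_self).1
    intro i
    rcases lt_trichotomy i n with hi | rfl | hi
    · rw [proj_cons_of_le hi, proj_cons_of_le hi.le, show n - i = n - (i + 1) + 1 by omega,
        eIter_succ_of_pos ha]
      simpa using le_ell_opow_mul (eIter (n - (i + 1)) a) one_pos
    · rw [proj_cons_of_lt i.lt_succ_self, proj_cons_of_le le_rfl, Nat.sub_self]
      exact proj_succ_le_ell_head hL
    · rw [proj_cons_of_lt (hi.trans i.lt_succ_self), proj_cons_of_lt hi]
      exact ih hL.tail i

end proj

theorem MNF_to_H_general (Λ : Ordinal) (heps : Ordinal.omega0 ^ Λ = Λ)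
    (L : List (ℕ × Ordinal)) (hL : MNFc Λ L) : proj L ∈ Hset Λ :=
  ⟨⟨isIgnatiev_proj hL, proj_lt heps fun p hp => (hL.2.1 p hp).2⟩, exists_proj_eq_zero L⟩

theorem MNF_to_H (Λ : Ordinal) (hpos : 0 < Λ) (heps : Ordinal.omega0 ^ Λ = Λ)
    (L : List (ℕ × Ordinal)) (hL : MNFc Λ L) : proj L ∈ Hset Λ :=
  MNF_to_H_general Λ heps L hL
end
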